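/- arXiv:cs/0701189 — 3 statements merged into one kernel-verified Lean document; each statement's English description precedes it below -/
import Mathlib

section
/- In a stable configuration of the maximal matching algorithm, every node i satisfies PRmarried(i) or PRdead(i). -/
structure Config (V : Type*) where
  p : V → Option V
  m : V → Bool

variable {V : Type*}

def PRmarried (G : SimpleGraph V) (p : V → Option V) (i : V) : Prop :=
  ∃ j, G.Adj i j ∧ p i = some j ∧ p j = some i

def PRwaiting (G : SimpleGraph V) (p : V → Option V) (i : V) : Prop :=
  ∃ j, G.Adj i j ∧ p i = some j ∧ p j ≠ some i ∧ ¬ PRmarried G p j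

def PRcondemned (G : SimpleGraph V) (p : V → Option V) (i : V) : Prop :=
  ∃ j, G.Adj i j ∧ p i = some j ∧ p j ≠ some i ∧ PRmarried G p j

def PRdead (G : SimpleGraph V) (p : V → Option V) (i : V) : Prop :=
  p i = none ∧ ∀ j, G.Adj i j → PRmarried G p j

def PRfree (G : SimpleGraph V) (p : V → Option V) (i : V) : Prop :=
  p i = none ∧ ∃ j, G.Adj i j ∧ ¬ PRmarried G p j

def Valid (G : SimpleGraph V) (C : Config V) : Prop :=
  ∀ i j, C.p i = some j → G.Adj i j

section Rules
variable [LinearOrder V]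

def UpdateEnabled (G : SimpleGraph V) (C : Config V) (i : V) : Prop :=
  ¬ (C.m i = true ↔ PRmarried G C.p i)

def MarriageEnabled (G : SimpleGraph V) (C : Config V) (i : V) : Prop :=
  (C.m i = true ↔ PRmarried G C.p i) ∧ C.p i = none ∧ ∃ j, G.Adj i j ∧ C.p j = some i

def SeductionEnabled (G : SimpleGraph V) (C : Config V) (i : V) : Prop :=
  (C.m i = true ↔ PRmarried G C.p i) ∧ C.p i = none ∧
    (∀ k, G.Adj i k → C.p k ≠ some i) ∧
    ∃ j, G.Adj i j ∧ C.p j = none ∧ i < j ∧ C.m j = false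

def AbandonmentEnabled (G : SimpleGraph V) (C : Config V) (i : V) : Prop :=
  (C.m i = true ↔ PRmarried G C.p i) ∧
    ∃ j, G.Adj i j ∧ C.p i = some j ∧ C.p j ≠ some i ∧ (C.m j = true ∨ j ≤ i)

def Eligible (G : SimpleGraph V) (C : Config V) (i : V) : Prop :=
  UpdateEnabled G C i ∨ MarriageEnabled G C i ∨ SeductionEnabled G C i ∨ AbandonmentEnabled G C i

def Stable (G : SimpleGraph V) (C : Config V) : Prop := ∀ i, ¬ Eligible G C i

def Unchanged (C C' : Config V) (i : V) : Prop := C'.p i = C.p i ∧ C'.m i = C.m i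

def DoesUpdate (G : SimpleGraph V) (C C' : Config V) (i : V) : Prop :=
  UpdateEnabled G C i ∧ C'.p i = C.p i ∧ (C'.m i = true ↔ PRmarried G C.p i)

def DoesMarriageTo (G : SimpleGraph V) (C C' : Config V) (i j : V) : Prop :=
  MarriageEnabled G C i ∧ G.Adj i j ∧ C.p j = some i ∧ C'.p i = some j ∧ C'.m i = C.m i

def DoesSeductionTo (G : SimpleGraph V) (C C' : Config V) (i j : V) : Prop :=
  SeductionEnabled G C i ∧ G.Adj i j ∧ C.p j = none ∧ i < j ∧ C.m j = false ∧
    (∀ k, G.Adj i k → C.p k = none → i < k → C.m k = false → k ≤ j) ∧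
    C'.p i = some j ∧ C'.m i = C.m i

def DoesAbandonmentFrom (G : SimpleGraph V) (C C' : Config V) (i j : V) : Prop :=
  AbandonmentEnabled G C i ∧ C.p i = some j ∧ C'.p i = none ∧ C'.m i = C.m i

def Moves (G : SimpleGraph V) (C C' : Config V) (i : V) : Prop :=
  DoesUpdate G C C' i ∨ (∃ j, DoesMarriageTo G C C' i j) ∨
    (∃ j, DoesSeductionTo G C C' i j) ∨ (∃ j, DoesAbandonmentFrom G C C' i j)

def Step (G : SimpleGraph V) (C C' : Config V) : Prop :=
  (∃ i, Moves G C C' i) ∧ ∀ i, Moves G C C' i ∨ Unchanged C C' i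

def MSAMoveTo (G : SimpleGraph V) (C C' : Config V) (i j : V) : Prop :=
  DoesMarriageTo G C C' i j ∨ DoesSeductionTo G C C' i j ∨ DoesAbandonmentFrom G C C' i j

def IJMove (G : SimpleGraph V) (C C' : Config V) (i j : V) : Prop :=
  MSAMoveTo G C C' i j ∨ MSAMoveTo G C C' j i

end Rules

/-!
In a stable configuration every pointer is returned. By downward induction on `i`: a pointer
`i → j` that is not returned survives Abandonment only if `i < j` and `j` is unmarked, hence
unmarried; but then `j` points nowhere (else `j` would be married by induction), so Marriage is
enabled at `j`. Consequently a node without a pointer and with an unmarried neighbour would form,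
with that neighbour, two adjacent nodes that nobody points at, and Seduction would be enabled at
the smaller one.
-/

namespace Stable

variable [LinearOrder V] {G : SimpleGraph V} {C : Config V}

theorem mark_iff (hstable : Stable G C) (i : V) : C.m i = true ↔ PRmarried G C.p i :=
  not_not.mp fun h => hstable i (Or.inl h)

theorem mark_eq_false (hstable : Stable G C) {i : V} (hi : ¬ PRmarried G C.p i) :
    C.m i = false := by
  simpa [← hstable.mark_iff] using hi

theorem pointer_symm [WellFoundedGT V] (hvalid : Valid G C) (hstable : Stable G C) {i j : V}
    (hij : C.p i = some j) : C.p j = some i := by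
  induction i using WellFoundedGT.induction generalizing j with
  | _ i ih =>
    by_contra hji
    have hadj : G.Adj i j := hvalid i j hij
    have ⟨hmj, hlt⟩ : C.m j ≠ true ∧ i < j := by
      simpa using fun h => hstable i (Or.inr (Or.inr (Or.inr
        ⟨hstable.mark_iff i, j, hadj, hij, hji, h⟩)))
    cases hj : C.p j with
    | none => exact hstable j (Or.inr (Or.inl ⟨hstable.mark_iff j, hj, i, hadj.symm, hij⟩))
    | some k => exact hmj ((hstable.mark_iff j).mpr ⟨k, hvalid j k hj, hj, ih j hlt hj⟩)

theorem married_of_pointer [WellFoundedGT V] (hvalid : Valid G C) (hstable : Stable G C)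
    {i j : V} (hij : C.p i = some j) : PRmarried G C.p i :=
  ⟨j, hvalid i j hij, hij, hstable.pointer_symm hvalid hij⟩

theorem not_free [WellFoundedGT V] (hvalid : Valid G C) (hstable : Stable G C) (i : V) :
    ¬ PRfree G C.p i := by
  have unpointed : ∀ {x k}, C.p x = none → C.p k ≠ some x := fun hx hk => by
    simpa [hx] using hstable.pointer_symm hvalid hk
  rintro ⟨hi, j, hadj, hj⟩
  have hpj : C.p j = none := Option.eq_none_iff_forall_ne_some.mpr fun k hk =>
    hj (hstable.married_of_pointer hvalid hk)
  have hmi : C.m i = false :=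
    hstable.mark_eq_false fun ⟨k, _, hk, _⟩ => by simp [hi] at hk
  rcases hadj.ne.lt_or_gt with hlt | hlt
  · exact hstable i (Or.inr (Or.inr (Or.inl ⟨hstable.mark_iff i, hi,
      fun k _ => unpointed hi, j, hadj, hpj, hlt, hstable.mark_eq_false hj⟩)))
  · exact hstable j (Or.inr (Or.inr (Or.inl ⟨hstable.mark_iff j, hpj,
      fun k _ => unpointed hpj, i, hadj.symm, hi, hlt, hmi⟩)))

end Stable

theorem stable_married_or_dead [Fintype V] [LinearOrder V] (G : SimpleGraph V)
    (C : Config V) (hvalid : Valid G C) (hstable : Stable G C) :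
    ∀ i, PRmarried G C.p i ∨ PRdead G C.p i := by
  intro i
  cases hi : C.p i with
  | some j => exact Or.inl (hstable.married_of_pointer hvalid hi)
  | none => exact Or.inr ⟨hi, fun j hadj => by_contra fun hj =>
      hstable.not_free hvalid i ⟨hi, j, hadj, hj⟩⟩
end

section
/- In any stable configuration of the maximal matching algorithm, the set M = { (i,j) ∈ E : p_i = j ∧ p_j = i } is a maximal matching of G: M is a matching and no proper superset of M is a matching. -/
variable {V : Type*}

def matchedEdges (G : SimpleGraph V) (p : V → Option V) : Set (Sym2 V) :=
  {e | ∃ i j, G.Adj i j ∧ p i = some j ∧ p j = some i ∧ e = s(i, j)}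

def IsMatchingSet (G : SimpleGraph V) (M : Set (Sym2 V)) : Prop :=
  M ⊆ G.edgeSet ∧ ∀ e ∈ M, ∀ f ∈ M, e ≠ f → ∀ v, v ∈ e → v ∉ f

/-! In a stable configuration pointers are reciprocated: an unanswered pointer `i → j` would
have to go to a larger, unmarried `j` (otherwise `i` abandons `j`), and `j` cannot have a null
pointer (it would marry `i`), so it points on to an even larger node, which is impossible in a
finite graph. Hence every node is married or dead, since two adjacent unmarried nodes would let
the smaller one seduce the other. So every edge touches a matched edge, and a matching
containing `M` cannot contain anything else. -/

theorem eq_of_mem_matchedEdges {G : SimpleGraph V} {p : V → Option V} {e : Sym2 V}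
    (he : e ∈ matchedEdges G p) {v : V} (hv : v ∈ e) : ∃ w, p v = some w ∧ e = s(v, w) := by
  obtain ⟨i, j, -, hij, hji, rfl⟩ := he
  rcases Sym2.mem_iff.1 hv with rfl | rfl
  · exact ⟨j, hij, rfl⟩
  · exact ⟨i, hji, Sym2.eq_swap⟩

theorem isMatchingSet_matchedEdges (G : SimpleGraph V) (p : V → Option V) :
    IsMatchingSet G (matchedEdges G p) := by
  refine ⟨fun e ⟨i, j, hadj, _, _, he⟩ => he ▸ hadj, fun e he f hf hne v hve hvf => hne ?_⟩
  obtain ⟨w, hw, rfl⟩ := eq_of_mem_matchedEdges he hve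
  obtain ⟨w', hw', rfl⟩ := eq_of_mem_matchedEdges hf hvf
  rw [Option.some.inj (hw.symm.trans hw')]

theorem IsMatchingSet.eq_of_subset {G : SimpleGraph V} {M M' : Set (Sym2 V)}
    (hM' : IsMatchingSet G M') (hsub : M ⊆ M') (hcover : ∀ e ∈ M', ∃ f ∈ M, ∃ v ∈ e, v ∈ f) :
    M' = M := by
  refine hsub.antisymm' fun e he => ?_
  obtain ⟨f, hf, v, hve, hvf⟩ := hcover e he
  by_cases hef : e = f
  · exact hef ▸ hf
  · exact absurd hvf (hM'.2 e he f (hsub hf) hef v hve)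

namespace Stable

variable [LinearOrder V] {G : SimpleGraph V} {C : Config V}

theorem m_eq_true_iff (h : Stable G C) (i : V) : C.m i = true ↔ PRmarried G C.p i :=
  not_not.1 fun hupdate => h i (Or.inl hupdate)

theorem p_symm [WellFoundedGT V] (hv : Valid G C) (h : Stable G C) {i j : V}
    (hij : C.p i = some j) : C.p j = some i := by
  induction i using WellFoundedGT.induction generalizing j with
  | _ i ih =>
    by_contra hji
    have hadj := hv i j hij
    have hno_abandon : ¬ (C.m j = true ∨ j ≤ i) := fun hj =>
      h i (Or.inr (Or.inr (Or.inr ⟨h.m_eq_true_iff i, j, hadj, hij, hji, hj⟩)))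
    push Not at hno_abandon
    obtain ⟨hmj, hlt⟩ := hno_abandon
    have hj : ¬ PRmarried G C.p j := fun hmarried => hmj ((h.m_eq_true_iff j).2 hmarried)
    cases hpj : C.p j with
    | none => exact h j (Or.inr (Or.inl ⟨h.m_eq_true_iff j, hpj, i, hadj.symm, hij⟩))
    | some k => exact hj ⟨k, hv j k hpj, hpj, ih j hlt hpj⟩

theorem p_eq_none_of_not_married [WellFoundedGT V] (hv : Valid G C) (h : Stable G C) {i : V}
    (hi : ¬ PRmarried G C.p i) : C.p i = none :=
  Option.eq_none_iff_forall_ne_some.2 fun j hij => hi ⟨j, hv i j hij, hij, h.p_symm hv hij⟩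

theorem married_or_dead [WellFoundedGT V] (hv : Valid G C) (h : Stable G C) (i : V) :
    PRmarried G C.p i ∨ PRdead G C.p i := by
  refine or_iff_not_imp_left.2 fun hi => ⟨h.p_eq_none_of_not_married hv hi, fun j hadj => ?_⟩
  by_contra hj
  wlog hlt : i < j generalizing i j
  · exact this j hj i hadj.symm hi (hadj.ne.symm.lt_of_le (not_lt.1 hlt))
  have hpi := h.p_eq_none_of_not_married hv hi
  have hmj : C.m j = false := Bool.eq_false_iff.2 fun hm => hj ((h.m_eq_true_iff j).1 hm)
  refine h i (Or.inr (Or.inr (Or.inl ⟨h.m_eq_true_iff i, hpi, fun k _ hki => ?_,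
    j, hadj, h.p_eq_none_of_not_married hv hj, hlt, hmj⟩)))
  exact Option.some_ne_none k ((h.p_symm hv hki).symm.trans hpi)

end Stable

theorem stable_maximal_matching [Fintype V] [LinearOrder V] (G : SimpleGraph V)
    (C : Config V) (hvalid : Valid G C) (hstable : Stable G C) :
    IsMatchingSet G (matchedEdges G C.p) ∧
      ∀ M' : Set (Sym2 V), IsMatchingSet G M' → matchedEdges G C.p ⊆ M' →
        M' = matchedEdges G C.p := by
  refine ⟨isMatchingSet_matchedEdges G C.p, fun M' hM' hsub => hM'.eq_of_subset hsub ?_⟩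
  rintro ⟨u, v⟩ huv
  have hcover : ∀ w ∈ s(u, v), PRmarried G C.p w →
      ∃ f ∈ matchedEdges G C.p, ∃ x ∈ s(u, v), x ∈ f :=
    fun w hw ⟨x, hadj, hwx, hxw⟩ =>
      ⟨s(w, x), ⟨w, x, hadj, hwx, hxw, rfl⟩, w, hw, Sym2.mem_mk_left w x⟩
  rcases hstable.married_or_dead hvalid u with hu | hu
  · exact hcover u (Sym2.mem_mk_left u v) hu
  · exact hcover v (Sym2.mem_mk_right u v) (hu.2 v (hM'.1 huv))
end

section
/- Any execution of the maximal matching algorithm under the distributed adversarial daemon on a graph with n nodes and m edges reaches a stable configuration after at most 3n + 2m steps. -/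
variable {V : Type*}

/-!
Potential argument. A node contributes at most 2 to the potential (the Update moves it can
still make: one before and one after it gets married), an edge `{i, j}` with `i < j` at most 3,
and 3 only if one endpoint points along it; as a node points at one neighbour at most, the
initial potential is at most `2n + 2m + n`. No term ever increases, an Update move lowers the
term of its node, and a Marriage, Seduction or Abandonment move changes a pointer along its
edge, which lowers the term of that edge. So every step lowers the potential.
-/

open Finset

theorem holds_of_potential_le {α : Type*} {R : α → α → Prop} {P : α → Prop} (Φ : α → ℕ)
    (hΦ : ∀ a b, R a b → Φ b < Φ a) (hP : ∀ a b, R a b → ¬ P a) {x : ℕ → α}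
    (hx : ∀ t, R (x t) (x (t + 1)) ∨ (P (x t) ∧ x (t + 1) = x t)) {T : ℕ}
    (hT : Φ (x 0) ≤ T) : P (x T) := by
  have key : ∀ t, P (x t) ∨ Φ (x t) + t ≤ Φ (x 0) := by
    intro t
    induction t with
    | zero => exact Or.inr le_rfl
    | succ t ih =>
      rcases hx t with hR | ⟨hPt, heq⟩
      · have := hΦ _ _ hR
        have := ih.resolve_left (hP _ _ hR)
        exact Or.inr (by omega)
      · exact Or.inl (heq ▸ hPt)
  refine (key T).elim id fun hT' => ?_
  rcases hx T with hR | ⟨hPT, _⟩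
  · have := hΦ _ _ hR
    omega
  · exact hPT

section EdgeWeight

open Classical in
/-- The weight of an edge `{i, j}` with `i < j`, read off `a := p i = j`, `b := p j = i`,
`Mi`, `Mj` (whether `i`, `j` are married) and `mj := m j`; it bounds the number of further
steps with `i,j`-moves. -/
noncomputable def edgeWeight (a b Mi Mj mj : Prop) : ℕ :=
  if a ∧ b then 0
  else if Mj then (if a then 1 else 0)
  else if Mi then (if b then 1 else 0)
  else if a then (if mj then 3 else 1)
  else if b then 3
  else 2

variable {a b Mi Mj mj a' b' Mi' Mj' mj' : Prop}

theorem edgeWeight_le_three : edgeWeight a b Mi Mj mj ≤ 3 := by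
  unfold edgeWeight
  split_ifs <;> omega

theorem edgeWeight_le_two (ha : ¬a) (hb : ¬b) : edgeWeight a b Mi Mj mj ≤ 2 := by
  unfold edgeWeight
  split_ifs <;> omega

/-- The hypotheses are the transitions of the state of an edge that the rules allow. -/
theorem edgeWeight_step (hMi_a : a → (Mi ↔ b)) (hMj_b : b → (Mj ↔ a))
    (hMi : Mi → Mi') (hMj : Mj → Mj') (hmj : ¬mj → mj' → Mj)
    (ha_new : ¬a → a' → ¬Mi ∧ (b ∨ ¬Mj ∧ ¬mj)) (hb_new : ¬b → b' → a ∧ ¬mj)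
    (ha_lost : a → ¬a' → ¬b ∧ mj) (hb_lost : b → ¬b' → ¬Mj' ∧ ¬mj') :
    edgeWeight a' b' Mi' Mj' mj' ≤ edgeWeight a b Mi Mj mj ∧
      (¬(a' ↔ a) ∨ ¬(b' ↔ b) → edgeWeight a' b' Mi' Mj' mj' < edgeWeight a b Mi Mj mj) := by
  unfold edgeWeight
  refine ⟨?_, fun hchange => ?_⟩ <;> split_ifs <;> first | omega | simp_all

end EdgeWeight

section Potential

variable {G : SimpleGraph V} {C C' : Config V} {p : V → Option V} {v w : V}

theorem not_PRmarried_of_eq_none (h : p v = none) : ¬ PRmarried G p v := by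
  rintro ⟨w, -, hw, -⟩
  simp [h] at hw

theorem PRmarried_iff_of_eq_some (hadj : G.Adj v w) (h : p v = some w) :
    PRmarried G p v ↔ p w = some v := by
  refine ⟨fun ⟨u, _, hu, hup⟩ => ?_, fun hw => ⟨w, hadj, h, hw⟩⟩
  rwa [Option.some_injective _ (h.symm.trans hu)]

theorem m_eq_false_of_iff_of_eq_none (hm : C.m v = true ↔ PRmarried G C.p v)
    (h : C.p v = none) : C.m v = false := by
  simpa [not_PRmarried_of_eq_none h] using hm

open Classical in
noncomputable def updatePot (G : SimpleGraph V) (C : Config V) (v : V) : ℕ :=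
  (if C.m v = true ↔ PRmarried G C.p v then 0 else 1) + if PRmarried G C.p v then 0 else 1

theorem updatePot_le_two (v : V) : updatePot G C v ≤ 2 := by
  unfold updatePot
  split_ifs <;> omega

theorem sum_updatePot_le [Fintype V] : ∑ v, updatePot G C v ≤ 2 * Fintype.card V :=
  (sum_le_sum fun v _ => updatePot_le_two v).trans_eq (by simp [mul_comm])

variable [LinearOrder V]

theorem MSAMoveTo.adj (h : MSAMoveTo G C C' v w) : G.Adj v w := by
  rcases h with h | h | ⟨⟨-, u, hadj, hu, -⟩, hv, -⟩
  · exact h.2.1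
  · exact h.2.1
  · rwa [Option.some_injective _ (hv.symm.trans hu)]

theorem MSAMoveTo.not_p_eq_some_iff (h : MSAMoveTo G C C' v w) :
    ¬(C'.p v = some w ↔ C.p v = some w) := by
  rcases h with h | h | h
  · simp [h.2.2.2.1, h.1.2.1]
  · simp [h.2.2.2.2.2.2.1, h.1.2.1]
  · simp [h.2.2.1, h.2.1]

namespace Step

theorem not_stable (h : Step G C C') : ¬ Stable G C := by
  obtain ⟨v, hU | ⟨w, hM⟩ | ⟨w, hS⟩ | ⟨w, hA⟩⟩ := h.1
  · exact fun hs => hs v (Or.inl hU.1)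
  · exact fun hs => hs v (Or.inr (Or.inl hM.1))
  · exact fun hs => hs v (Or.inr (Or.inr (Or.inl hS.1)))
  · exact fun hs => hs v (Or.inr (Or.inr (Or.inr hA.1)))

theorem m_eq_or_doesUpdate (h : Step G C C') (v : V) :
    C'.m v = C.m v ∨ DoesUpdate G C C' v := by
  obtain (hU | ⟨w, hM⟩ | ⟨w, hS⟩ | ⟨w, hA⟩) | hunchanged := h.2 v
  · exact Or.inr hU
  · exact Or.inl hM.2.2.2.2
  · exact Or.inl hS.2.2.2.2.2.2.2
  · exact Or.inl hA.2.2.2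
  · exact Or.inl hunchanged.2

theorem p_eq_or (h : Step G C C') (v : V) :
    C'.p v = C.p v ∨ (∃ w, DoesMarriageTo G C C' v w) ∨ (∃ w, DoesSeductionTo G C C' v w) ∨
      ∃ w, DoesAbandonmentFrom G C C' v w := by
  obtain (hU | hM | hS | hA) | hunchanged := h.2 v
  · exact Or.inl hU.2.1
  · exact Or.inr (Or.inl hM)
  · exact Or.inr (Or.inr (Or.inl hS))
  · exact Or.inr (Or.inr (Or.inr hA))
  · exact Or.inl hunchanged.1

theorem p_eq_of_PRmarried (h : Step G C C') (hv : PRmarried G C.p v) :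
    C'.p v = C.p v := by
  obtain ⟨w, -, hvw, hwv⟩ := hv
  obtain he | ⟨u, hM⟩ | ⟨u, hS⟩ | ⟨u, ⟨-, u', -, hu', hne, -⟩, -⟩ := h.p_eq_or v
  · exact he
  · simp [hM.1.2.1] at hvw
  · simp [hS.1.2.1] at hvw
  · rw [hvw, Option.some_inj] at hu'
    exact absurd (hu' ▸ hwv) hne

theorem PRmarried_of_PRmarried (h : Step G C C') (hv : PRmarried G C.p v) :
    PRmarried G C'.p v := by
  obtain ⟨w, hadj, hvw, hwv⟩ := hv
  refine ⟨w, hadj, ?_, ?_⟩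
  · rw [h.p_eq_of_PRmarried ⟨w, hadj, hvw, hwv⟩, hvw]
  · rw [h.p_eq_of_PRmarried ⟨v, hadj.symm, hwv, hvw⟩, hwv]

theorem PRmarried_of_m_eq_true (h : Step G C C') (hold : C.m v = false)
    (hnew : C'.m v = true) :
    PRmarried G C.p v := by
  rcases h.m_eq_or_doesUpdate v with he | hU
  · simp [he, hold] at hnew
  · exact hU.2.2.mp hnew

theorem of_p_eq_some (h : Step G C C') (hold : C.p v ≠ some w) (hnew : C'.p v = some w) :
    C.p v = none ∧ C.m v = false ∧
      (C.p w = some v ∨ C.p w = none ∧ C.m w = false ∧ v < w) := by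
  obtain he | ⟨u, hM⟩ | ⟨u, hS⟩ | ⟨u, hA⟩ := h.p_eq_or v
  · exact absurd (he ▸ hnew) hold
  · obtain rfl : u = w := Option.some_injective _ (hM.2.2.2.1.symm.trans hnew)
    exact ⟨hM.1.2.1, m_eq_false_of_iff_of_eq_none hM.1.1 hM.1.2.1, Or.inl hM.2.2.1⟩
  · obtain rfl : u = w := Option.some_injective _ (hS.2.2.2.2.2.2.1.symm.trans hnew)
    exact ⟨hS.1.2.1, m_eq_false_of_iff_of_eq_none hS.1.1 hS.1.2.1,
      Or.inr ⟨hS.2.2.1, hS.2.2.2.2.1, hS.2.2.2.1⟩⟩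
  · simp [hA.2.2.1] at hnew

theorem of_p_ne_some (h : Step G C C') (hold : C.p v = some w) (hnew : C'.p v ≠ some w) :
    C'.p v = none ∧ C'.m v = C.m v ∧ (C.m v = true ↔ PRmarried G C.p v) ∧
      C.p w ≠ some v ∧ (C.m w = true ∨ w ≤ v) := by
  obtain he | ⟨u, hM⟩ | ⟨u, hS⟩ | ⟨u, ⟨hg, u', -, hu', hne, hcond⟩, hA⟩ := h.p_eq_or v
  · exact absurd (he ▸ hold) hnew
  · simp [hM.1.2.1] at hold
  · simp [hS.1.2.1] at hold
  · obtain rfl : w = u' := Option.some_injective _ (hold.symm.trans hu')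
    exact ⟨hA.2.1, hA.2.2, hg, hne, hcond⟩

end Step

/-- Used only for `i < j`; `edgePot` symmetrizes it. -/
noncomputable def pairPot (G : SimpleGraph V) (C : Config V) (i j : V) : ℕ :=
  edgeWeight (C.p i = some j) (C.p j = some i) (PRmarried G C.p i) (PRmarried G C.p j)
    (C.m j = true)

theorem Step.pairPot_step (h : Step G C C') {i j : V} (hadj : G.Adj i j) (hlt : i < j) :
    pairPot G C' i j ≤ pairPot G C i j ∧
      (¬(C'.p i = some j ↔ C.p i = some j) ∨ ¬(C'.p j = some i ↔ C.p j = some i) →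
        pairPot G C' i j < pairPot G C i j) := by
  have hi_new (hold : C.p i ≠ some j) (hnew : C'.p i = some j) :
      ¬PRmarried G C.p i ∧
        (C.p j = some i ∨ ¬PRmarried G C.p j ∧ ¬C.m j = true) := by
    obtain ⟨hi, -, hj⟩ := h.of_p_eq_some hold hnew
    refine ⟨not_PRmarried_of_eq_none hi, hj.imp_right fun hj => ?_⟩
    exact ⟨not_PRmarried_of_eq_none hj.1, by simp [hj.2.1]⟩
  have hj_new (hold : C.p j ≠ some i) (hnew : C'.p j = some i) :
      C.p i = some j ∧ ¬C.m j = true := by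
    obtain ⟨-, hmj, hi | ⟨-, -, hji⟩⟩ := h.of_p_eq_some hold hnew
    · exact ⟨hi, by simp [hmj]⟩
    · exact absurd hlt hji.asymm
  have hi_lost (hold : C.p i = some j) (hnew : C'.p i ≠ some j) :
      C.p j ≠ some i ∧ C.m j = true := by
    obtain ⟨-, -, -, hj, hmj | hji⟩ := h.of_p_ne_some hold hnew
    · exact ⟨hj, hmj⟩
    · exact absurd hlt hji.not_gt
  have hj_lost (hold : C.p j = some i) (hnew : C'.p j ≠ some i) :
      ¬PRmarried G C'.p j ∧ ¬C'.m j = true := by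
    obtain ⟨hj', hmj', hguard, hi, -⟩ := h.of_p_ne_some hold hnew
    have hMj : ¬PRmarried G C.p j := fun hM =>
      hi ((PRmarried_iff_of_eq_some hadj.symm hold).mp hM)
    exact ⟨not_PRmarried_of_eq_none hj', by rwa [hmj', hguard]⟩
  exact edgeWeight_step (PRmarried_iff_of_eq_some hadj) (PRmarried_iff_of_eq_some hadj.symm)
    h.PRmarried_of_PRmarried h.PRmarried_of_PRmarried
    (fun hmj hmj' => h.PRmarried_of_m_eq_true (by simpa using hmj) hmj')
    hi_new hj_new hi_lost hj_lost

noncomputable def edgePot (G : SimpleGraph V) (C : Config V) : Sym2 V → ℕ :=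
  Sym2.lift ⟨fun i j => pairPot G C (min i j) (max i j), fun i j => by
    simp only [min_comm, max_comm]⟩

theorem edgePot_mk_of_lt {i j : V} (hlt : i < j) : edgePot G C s(i, j) = pairPot G C i j := by
  simp [edgePot, min_eq_left hlt.le, max_eq_right hlt.le]

theorem edgePot_le_three (e : Sym2 V) : edgePot G C e ≤ 3 := by
  induction e using Sym2.ind with
  | _ i j => exact edgeWeight_le_three

theorem edgePot_le_two (e : Sym2 V) (he : ∀ v w, e = s(v, w) → C.p v ≠ some w) :
    edgePot G C e ≤ 2 := by
  induction e using Sym2.ind with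
  | _ i j =>
    refine edgeWeight_le_two (he _ _ ?_) (he _ _ ?_) <;>
      rcases le_total i j with hij | hij <;> simp [hij, Sym2.eq_swap]

theorem Step.edgePot_le (h : Step G C C') {e : Sym2 V} (he : e ∈ G.edgeSet) :
    edgePot G C' e ≤ edgePot G C e := by
  induction e using Sym2.ind with
  | _ i j =>
    rw [SimpleGraph.mem_edgeSet] at he
    rcases lt_or_gt_of_ne he.ne with hij | hji
    · simpa only [edgePot_mk_of_lt hij] using (h.pairPot_step he hij).1
    · rw [Sym2.eq_swap, edgePot_mk_of_lt hji, edgePot_mk_of_lt hji]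
      exact (h.pairPot_step he.symm hji).1

theorem Step.edgePot_lt (h : Step G C C') (hmove : MSAMoveTo G C C' v w) :
    edgePot G C' s(v, w) < edgePot G C s(v, w) := by
  have hadj := hmove.adj
  rcases lt_or_gt_of_ne hadj.ne with hvw | hwv
  · simpa only [edgePot_mk_of_lt hvw] using
      (h.pairPot_step hadj hvw).2 (Or.inl hmove.not_p_eq_some_iff)
  · rw [Sym2.eq_swap, edgePot_mk_of_lt hwv, edgePot_mk_of_lt hwv]
    exact (h.pairPot_step hadj.symm hwv).2 (Or.inr hmove.not_p_eq_some_iff)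

theorem Step.updatePot_le (h : Step G C C') (v : V) : updatePot G C' v ≤ updatePot G C v := by
  have hM := h.PRmarried_of_PRmarried (v := v)
  unfold updatePot
  rcases h.m_eq_or_doesUpdate v with hm | ⟨-, -, hm⟩ <;> split_ifs <;> simp_all

theorem Step.updatePot_lt (h : Step G C C') (hU : DoesUpdate G C C' v) :
    updatePot G C' v < updatePot G C v := by
  have hM := h.PRmarried_of_PRmarried (v := v)
  obtain ⟨hen, -, hm⟩ := hU
  unfold UpdateEnabled at hen
  unfold updatePot
  split_ifs <;> simp_all

noncomputable def potential [Fintype V] (G : SimpleGraph V) [DecidableRel G.Adj] (C : Config V) :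
    ℕ :=
  ∑ v, updatePot G C v + ∑ e ∈ G.edgeFinset, edgePot G C e

theorem Step.potential_lt [Fintype V] [DecidableRel G.Adj] (h : Step G C C') :
    potential G C' < potential G C := by
  have hU : ∑ v, updatePot G C' v ≤ ∑ v, updatePot G C v :=
    sum_le_sum fun v _ => h.updatePot_le v
  have hE : ∑ e ∈ G.edgeFinset, edgePot G C' e ≤ ∑ e ∈ G.edgeFinset, edgePot G C e :=
    sum_le_sum fun e he => h.edgePot_le (G.mem_edgeFinset.mp he)
  obtain ⟨v, hv⟩ := h.1
  have hmove (w : V) (hvw : MSAMoveTo G C C' v w) : potential G C' < potential G C := by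
    have : ∑ e ∈ G.edgeFinset, edgePot G C' e < ∑ e ∈ G.edgeFinset, edgePot G C e :=
      sum_lt_sum (fun e he => h.edgePot_le (G.mem_edgeFinset.mp he))
        ⟨s(v, w), G.mem_edgeFinset.mpr hvw.adj, h.edgePot_lt hvw⟩
    unfold potential
    omega
  obtain hUpd | ⟨w, hM⟩ | ⟨w, hS⟩ | ⟨w, hA⟩ := hv
  · have : ∑ v, updatePot G C' v < ∑ v, updatePot G C v :=
      sum_lt_sum (fun v _ => h.updatePot_le v) ⟨v, mem_univ v, h.updatePot_lt hUpd⟩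
    unfold potential
    omega
  · exact hmove w (Or.inl hM)
  · exact hmove w (Or.inr (Or.inl hS))
  · exact hmove w (Or.inr (Or.inr hA))

theorem sum_edgePot_le [Fintype V] [DecidableRel G.Adj] :
    ∑ e ∈ G.edgeFinset, edgePot G C e ≤ 2 * #G.edgeFinset + Fintype.card V := by
  set P := univ.image fun v => s(v, (C.p v).getD v)
  have hle (e : Sym2 V) : edgePot G C e ≤ 2 + if e ∈ P then 1 else 0 := by
    split_ifs with he
    · exact edgePot_le_three e
    · refine edgePot_le_two e fun v w hvw hp => he ?_
      exact mem_image.mpr ⟨v, mem_univ v, by simp [hp, hvw]⟩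
  calc ∑ e ∈ G.edgeFinset, edgePot G C e
      ≤ ∑ e ∈ G.edgeFinset, (2 + if e ∈ P then 1 else 0) := sum_le_sum fun e _ => hle e
    _ = 2 * #G.edgeFinset + #(G.edgeFinset ∩ P) := by
      rw [sum_add_distrib, sum_const, smul_eq_mul, sum_boole, filter_mem_eq_inter, mul_comm,
        Nat.cast_id]
    _ ≤ 2 * #G.edgeFinset + Fintype.card V := by
      gcongr
      exact (card_le_card inter_subset_right).trans (card_image_le.trans_eq card_univ)

theorem potential_le [Fintype V] [DecidableRel G.Adj] (C : Config V) :
    potential G C ≤ 3 * Fintype.card V + 2 * #G.edgeFinset := by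
  have := sum_updatePot_le (G := G) (C := C)
  have := sum_edgePot_le (G := G) (C := C)
  unfold potential
  omega

end Potential

theorem stabilizes_within_3n_plus_2m_general [Fintype V] [LinearOrder V] (G : SimpleGraph V)
    [DecidableRel G.Adj]
    (C : ℕ → Config V)
    (hexec : ∀ t, Step G (C t) (C (t+1)) ∨ (Stable G (C t) ∧ C (t+1) = C t)) :
    Stable G (C (3 * Fintype.card V + 2 * G.edgeFinset.card)) :=
  holds_of_potential_le (potential G) (fun _ _ h => h.potential_lt) (fun _ _ h => h.not_stable)
    hexec (potential_le (C 0))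

theorem stabilizes_within_3n_plus_2m [Fintype V] [LinearOrder V] (G : SimpleGraph V)
    [DecidableRel G.Adj]
    (C : ℕ → Config V) (hvalid : Valid G (C 0))
    (hexec : ∀ t, Step G (C t) (C (t+1)) ∨ (Stable G (C t) ∧ C (t+1) = C t)) :
    Stable G (C (3 * Fintype.card V + 2 * G.edgeFinset.card)) :=
  stabilizes_within_3n_plus_2m_general G C hexec
end
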